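/- arXiv:2308.16701 — 6 statements merged into one kernel-verified Lean document; each statement's English description precedes it below -/
import Mathlib

section
/- Let X and Y be invertible n×n complex matrices, set Z = XY, and let f₁, f₂ : Matrix (Fin n) (Fin n) ℂ → ℂ be Fréchet differentiable at Z. Let ρ_Y(M) = M·Y and λ_X(M) = X·M. Then for arbitrary ℂ-linear endomorphisms R, R', R'' of the space of n×n complex matrices, the following identity holds: {f₁∘ρ_Y, f₂∘ρ_Y}_{R',R}(X) + {f₁∘λ_X, f₂∘λ_X}_{R,R''}(Y) = {f₁, f₂}_{R',R''}(Z). (This is the identity expressing that the multiplication map G_{r',r} × G_{r,r''} → G_{r',r''} is Poisson.) -/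
open Matrix

noncomputable section

attribute [local instance] Matrix.normedAddCommGroup Matrix.normedSpace

/-- The left gradient: `∇ᴸf(M) i j = Df(M)(M ⬝ E_{ji})`. -/
def gradL {n : ℕ} (f : Matrix (Fin n) (Fin n) ℂ → ℂ) (M : Matrix (Fin n) (Fin n) ℂ) :
    Matrix (Fin n) (Fin n) ℂ :=
  fun i j => fderiv ℂ f M (M * Matrix.single j i 1)

/-- The right gradient: `∇ᴿf(M) i j = Df(M)(E_{ji} ⬝ M)`. -/
def gradR {n : ℕ} (f : Matrix (Fin n) (Fin n) ℂ → ℂ) (M : Matrix (Fin n) (Fin n) ℂ) :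
    Matrix (Fin n) (Fin n) ℂ :=
  fun i j => fderiv ℂ f M (Matrix.single j i 1 * M)

/-- The bracket `{f₁, f₂}_{P,Q}(M) = tr(Q(∇ᴸf₁)·∇ᴸf₂) − tr(P(∇ᴿf₁)·∇ᴿf₂)`. -/
def bracket {n : ℕ}
    (P Q : Matrix (Fin n) (Fin n) ℂ →ₗ[ℂ] Matrix (Fin n) (Fin n) ℂ)
    (f₁ f₂ : Matrix (Fin n) (Fin n) ℂ → ℂ) (M : Matrix (Fin n) (Fin n) ℂ) : ℂ :=
  Matrix.trace (Q (gradL f₁ M) * gradL f₂ M) - Matrix.trace (P (gradR f₁ M) * gradR f₂ M)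

/-! By the chain rule, right gradients are unchanged under `f ↦ f ∘ ρ_Y` and left gradients
under `f ↦ f ∘ λ_X`, while the left gradient of `f ∘ ρ_Y` at `X` and the right gradient of
`f ∘ λ_X` at `Y` are the same matrix `(i, j) ↦ Df(XY)(X E_{ji} Y)`. Hence the two terms involving
`R` cancel and what remains is the bracket at `XY`. -/

section MatrixCalculus

variable {𝕜 F : Type*} [NontriviallyNormedField 𝕜] [CompleteSpace 𝕜]
  [NormedAddCommGroup F] [NormedSpace 𝕜 F]
  {l m n : Type*} [Fintype l] [Fintype m] [Fintype n]

theorem fderiv_comp_mul_right_apply {f : Matrix l n 𝕜 → F} {X : Matrix l m 𝕜}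
    {Y : Matrix m n 𝕜} (hf : DifferentiableAt 𝕜 f (X * Y)) (ξ : Matrix l m 𝕜) :
    fderiv 𝕜 (fun M => f (M * Y)) X ξ = fderiv 𝕜 f (X * Y) (ξ * Y) := by
  let L : Matrix l m 𝕜 →L[𝕜] Matrix l n 𝕜 := (mulRightLinearMap l 𝕜 Y).toContinuousLinearMap
  have hfL : DifferentiableAt 𝕜 f (L X) := hf
  exact congrArg (· ξ) (hfL.hasFDerivAt.comp X L.hasFDerivAt).fderiv

theorem fderiv_comp_mul_left_apply {f : Matrix l n 𝕜 → F} {X : Matrix l m 𝕜}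
    {Y : Matrix m n 𝕜} (hf : DifferentiableAt 𝕜 f (X * Y)) (ξ : Matrix m n 𝕜) :
    fderiv 𝕜 (fun M => f (X * M)) Y ξ = fderiv 𝕜 f (X * Y) (X * ξ) := by
  let L : Matrix m n 𝕜 →L[𝕜] Matrix l n 𝕜 := (mulLeftLinearMap n 𝕜 X).toContinuousLinearMap
  have hfL : DifferentiableAt 𝕜 f (L Y) := hf
  exact congrArg (· ξ) (hfL.hasFDerivAt.comp Y L.hasFDerivAt).fderiv

end MatrixCalculus

section Gradients

variable {n : ℕ} {f : Matrix (Fin n) (Fin n) ℂ → ℂ} {X Y : Matrix (Fin n) (Fin n) ℂ}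

theorem gradR_comp_mul_right (hf : DifferentiableAt ℂ f (X * Y)) :
    gradR (fun M => f (M * Y)) X = gradR f (X * Y) := by
  ext i j
  simp only [gradR, fderiv_comp_mul_right_apply hf, Matrix.mul_assoc]

theorem gradL_comp_mul_left (hf : DifferentiableAt ℂ f (X * Y)) :
    gradL (fun M => f (X * M)) Y = gradL f (X * Y) := by
  ext i j
  simp only [gradL, fderiv_comp_mul_left_apply hf, Matrix.mul_assoc]

theorem gradL_comp_mul_right_eq_gradR_comp_mul_left (hf : DifferentiableAt ℂ f (X * Y)) :
    gradL (fun M => f (M * Y)) X = gradR (fun M => f (X * M)) Y := by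
  ext i j
  simp only [gradL, gradR, fderiv_comp_mul_right_apply hf, fderiv_comp_mul_left_apply hf,
    Matrix.mul_assoc]

end Gradients

theorem multiplication_is_poisson_general {n : ℕ} (X Y : Matrix (Fin n) (Fin n) ℂ)
    (f₁ f₂ : Matrix (Fin n) (Fin n) ℂ → ℂ)
    (hf₁ : DifferentiableAt ℂ f₁ (X * Y)) (hf₂ : DifferentiableAt ℂ f₂ (X * Y))
    (R R' R'' : Matrix (Fin n) (Fin n) ℂ →ₗ[ℂ] Matrix (Fin n) (Fin n) ℂ) :
    bracket R' R (fun M => f₁ (M * Y)) (fun M => f₂ (M * Y)) X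
      + bracket R R'' (fun M => f₁ (X * M)) (fun M => f₂ (X * M)) Y
      = bracket R' R'' f₁ f₂ (X * Y) := by
  simp only [bracket, gradR_comp_mul_right hf₁, gradR_comp_mul_right hf₂,
    gradL_comp_mul_left hf₁, gradL_comp_mul_left hf₂,
    gradL_comp_mul_right_eq_gradR_comp_mul_left hf₁,
    gradL_comp_mul_right_eq_gradR_comp_mul_left hf₂]
  ring

/-- The multiplication map `G_{r',r} × G_{r,r''} → G_{r',r''}` is Poisson:
`{f₁∘ρ_Y, f₂∘ρ_Y}_{R',R}(X) + {f₁∘λ_X, f₂∘λ_X}_{R,R''}(Y) = {f₁, f₂}_{R',R''}(XY)`. -/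
theorem multiplication_is_poisson {n : ℕ} (X Y : Matrix (Fin n) (Fin n) ℂ)
    (hX : IsUnit X) (hY : IsUnit Y)
    (f₁ f₂ : Matrix (Fin n) (Fin n) ℂ → ℂ)
    (hf₁ : DifferentiableAt ℂ f₁ (X * Y)) (hf₂ : DifferentiableAt ℂ f₂ (X * Y))
    (R R' R'' : Matrix (Fin n) (Fin n) ℂ →ₗ[ℂ] Matrix (Fin n) (Fin n) ℂ) :
    bracket R' R (fun M => f₁ (M * Y)) (fun M => f₂ (M * Y)) X
      + bracket R R'' (fun M => f₁ (X * M)) (fun M => f₂ (X * M)) Y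
      = bracket R' R'' f₁ f₂ (X * Y) :=
  multiplication_is_poisson_general X Y f₁ f₂ hf₁ hf₂ R R' R''
end
end

section
/- Let F be a field, 0 < r < n, and let M be an invertible n×n matrix over F. Index rows and columns by 1,…,n and write M in blocks M₁₁ = M[1..r, 1..n−r], M₁₂ = M[1..r, n−r+1..n], M₂₁ = M[r+1..n, 1..n−r], M₂₂ = M[r+1..n, n−r+1..n]. Suppose that the inverse N = M⁻¹ satisfies: (i) its top-right (n−r)×(n−r) block N[1..n−r, r+1..n] is zero, and (ii) its bottom-left r×r block Ñ₂₁ = N[n−r+1..n, 1..r] is upper triangular. Assume moreover that M₂₁ is invertible. Then the r×r matrix C(M) = M₁₂ − M₁₁·M₂₁⁻¹·M₂₂ is upper triangular; in fact C(M)·Ñ₂₁ = I, so C(M) is the inverse of the upper-triangular matrix Ñ₂₁. -/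
/-! Only the first `r` columns of `M * M⁻¹ = 1` matter. Splitting the columns of `M` at `n − r`
and the rows of `N = M⁻¹` accordingly, with `N₁₁ = N[1..n−r, 1..r]`, they read
`M₁₁ N₁₁ + M₁₂ Ñ₂₁ = 1` and `M₂₁ N₁₁ + M₂₂ Ñ₂₁ = 0`. Eliminating `N₁₁ = −M₂₁⁻¹ M₂₂ Ñ₂₁` from
the first equation gives `C(M) Ñ₂₁ = 1`, so `C(M) = Ñ₂₁⁻¹`, and the inverse of an upper
triangular matrix is upper triangular. -/

open Matrix

noncomputable section

variable {F : Type*} [Field F] {n r : ℕ}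

/-- The inclusion of the bottom `n - r` indices: `i ↦ r + i`. -/
def botIdx (n r : ℕ) (i : Fin (n - r)) : Fin n :=
  ⟨r + i.val, by have := i.isLt; omega⟩

/-- The inclusion of the last `r` indices: `j ↦ (n - r) + j` (needs `r ≤ n`). -/
def rightIdx {n r : ℕ} (h : r ≤ n) (j : Fin r) : Fin n :=
  ⟨n - r + j.val, by have := j.isLt; omega⟩

/-- `M₁₁ = M[1..r, 1..n−r]`. -/
def blk11 (h : r ≤ n) (M : Matrix (Fin n) (Fin n) F) : Matrix (Fin r) (Fin (n - r)) F :=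
  M.submatrix (Fin.castLE h) (Fin.castLE (Nat.sub_le n r))

/-- `M₁₂ = M[1..r, n−r+1..n]`. -/
def blk12 (h : r ≤ n) (M : Matrix (Fin n) (Fin n) F) : Matrix (Fin r) (Fin r) F :=
  M.submatrix (Fin.castLE h) (rightIdx h)

/-- `M₂₁ = M[r+1..n, 1..n−r]`. -/
def blk21 (M : Matrix (Fin n) (Fin n) F) : Matrix (Fin (n - r)) (Fin (n - r)) F :=
  M.submatrix (botIdx n r) (Fin.castLE (Nat.sub_le n r))

/-- `M₂₂ = M[r+1..n, n−r+1..n]`. -/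
def blk22 (h : r ≤ n) (M : Matrix (Fin n) (Fin n) F) : Matrix (Fin (n - r)) (Fin r) F :=
  M.submatrix (botIdx n r) (rightIdx h)

/-- `Ñ₂₁ = N[n−r+1..n, 1..r]`. -/
def blkTilde21 (h : r ≤ n) (N : Matrix (Fin n) (Fin n) F) : Matrix (Fin r) (Fin r) F :=
  N.submatrix (rightIdx h) (Fin.castLE h)

theorem Matrix.schur_complement_mul_eq_one {R k m m' : Type*} [CommRing R]
    [Fintype k] [DecidableEq k] [Fintype m'] [DecidableEq m]
    {A : Matrix m k R} {B : Matrix m m' R} {C : Matrix k k R} {D : Matrix k m' R}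
    {P : Matrix k m R} {Q : Matrix m' m R} (hC : IsUnit C)
    (h₁ : A * P + B * Q = 1) (h₂ : C * P + D * Q = 0) :
    (B - A * C⁻¹ * D) * Q = 1 := by
  have hP : P = C⁻¹ * -(D * Q) := by
    rw [← eq_neg_of_add_eq_zero_left h₂,
      nonsing_inv_mul_cancel_left _ _ ((isUnit_iff_isUnit_det C).mp hC)]
  calc (B - A * C⁻¹ * D) * Q = A * P + B * Q := by
        rw [hP]
        simp only [Matrix.sub_mul, Matrix.mul_neg, Matrix.mul_assoc]
        abel
    _ = 1 := h₁

theorem Matrix.BlockTriangular.of_mul_eq_one {R m α : Type*} [CommRing R] [Fintype m]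
    [DecidableEq m] [LinearOrder α] {b : m → α} {C N : Matrix m m R}
    (hN : N.BlockTriangular b) (hCN : C * N = 1) : C.BlockTriangular b := by
  have : Invertible N := invertibleOfLeftInverse N C hCN
  rw [← inv_eq_left_inv hCN]
  exact blockTriangular_inv_of_blockTriangular hN

theorem submatrix_mul_eq_left_add_right {R l o l' o' : Type*} [NonUnitalNonAssocSemiring R]
    (h : r ≤ n) (X : Matrix l (Fin n) R) (Y : Matrix (Fin n) o R) (e : l' → l) (f : o' → o) :
    (X * Y).submatrix e f =
      X.submatrix e (Fin.castLE (Nat.sub_le n r)) * Y.submatrix (Fin.castLE (Nat.sub_le n r)) f +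
        X.submatrix e (rightIdx h) * Y.submatrix (rightIdx h) f := by
  let cols : Fin (n - r) ⊕ Fin r ≃ Fin n := finSumFinEquiv.trans (finCongr (by omega))
  ext i j
  simp only [submatrix_apply, Matrix.add_apply, mul_apply]
  rw [← cols.sum_comp, Fintype.sum_sum_type]
  rfl

theorem first_cols_of_mul_eq_one (h : r ≤ n) {M N : Matrix (Fin n) (Fin n) F} (hMN : M * N = 1) :
    blk11 h M * N.submatrix (Fin.castLE (Nat.sub_le n r)) (Fin.castLE h) +
        blk12 h M * blkTilde21 h N = 1 ∧
      blk21 M * N.submatrix (Fin.castLE (Nat.sub_le n r)) (Fin.castLE h) +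
        blk22 h M * blkTilde21 h N = 0 := by
  have top := submatrix_mul_eq_left_add_right h M N (Fin.castLE h) (Fin.castLE h)
  have bot := submatrix_mul_eq_left_add_right h M N (botIdx n r) (Fin.castLE h)
  rw [hMN, submatrix_one _ (Fin.castLE_injective h)] at top
  have hbot : (1 : Matrix (Fin n) (Fin n) F).submatrix (botIdx n r) (Fin.castLE h) = 0 := by
    ext i j
    simp only [submatrix_apply, one_apply, Matrix.zero_apply, botIdx, Fin.ext_iff, Fin.val_castLE]
    exact if_neg (by omega)
  rw [hMN, hbot] at bot
  exact ⟨top.symm, bot.symm⟩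

theorem schur_complement_upper_triangular_general
    (hrn : r < n) (M : Matrix (Fin n) (Fin n) F) (hM : IsUnit M)
    (hN2 : ∀ i j : Fin r, (j : ℕ) < (i : ℕ) → blkTilde21 hrn.le M⁻¹ i j = 0)
    (hM21 : IsUnit (blk21 (r := r) M)) :
    let C : Matrix (Fin r) (Fin r) F :=
      blk12 hrn.le M - blk11 hrn.le M * (blk21 M : Matrix (Fin (n - r)) (Fin (n - r)) F)⁻¹ * blk22 hrn.le M
    (∀ i j : Fin r, (j : ℕ) < (i : ℕ) → C i j = 0) ∧
    C * blkTilde21 hrn.le M⁻¹ = 1 := by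
  intro C
  obtain ⟨h₁, h₂⟩ :=
    first_cols_of_mul_eq_one hrn.le (mul_nonsing_inv M ((isUnit_iff_isUnit_det M).mp hM))
  have hCN : C * blkTilde21 hrn.le M⁻¹ = 1 := schur_complement_mul_eq_one hM21 h₁ h₂
  have hN : (blkTilde21 hrn.le M⁻¹).BlockTriangular id := fun i j hij => hN2 i j hij
  exact ⟨fun i j hij => hN.of_mul_eq_one hCN hij, hCN⟩

/-- If `M` is invertible, the top-right `(n−r)×(n−r)` block of `N = M⁻¹` vanishes, the
bottom-left `r×r` block `Ñ₂₁` of `N` is upper triangular, and `M₂₁` is invertible, then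
`C(M) = M₁₂ − M₁₁·M₂₁⁻¹·M₂₂` is upper triangular; in fact `C(M)·Ñ₂₁ = 1`. -/
theorem schur_complement_upper_triangular
    (h0 : 0 < r) (hrn : r < n) (M : Matrix (Fin n) (Fin n) F) (hM : IsUnit M)
    (hN1 : ∀ i j : Fin n, (i : ℕ) < n - r → r ≤ (j : ℕ) → M⁻¹ i j = 0)
    (hN2 : ∀ i j : Fin r, (j : ℕ) < (i : ℕ) → blkTilde21 hrn.le M⁻¹ i j = 0)
    (hM21 : IsUnit (blk21 (r := r) M)) :
    let C : Matrix (Fin r) (Fin r) F :=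
      blk12 hrn.le M - blk11 hrn.le M * (blk21 M : Matrix (Fin (n - r)) (Fin (n - r)) F)⁻¹ * blk22 hrn.le M
    (∀ i j : Fin r, (j : ℕ) < (i : ℕ) → C i j = 0) ∧
    C * blkTilde21 hrn.le M⁻¹ = 1 :=
  schur_complement_upper_triangular_general hrn M hM hN2 hM21
end
end

section
/- Let h be a Lie subalgebra of the Lie algebra of n×n complex matrices (commutator bracket), and let π be a ℂ-linear endomorphism of the space of n×n matrices such that: (i) π(x) = x for every x ∈ h; (ii) π(η) ∈ h for every η; (iii) tr((η − π(η))·y) = 0 for every η and every y ∈ h; and (iv) π(θ) = 0 whenever tr(θ·y) = 0 for all y ∈ h (so π is the orthogonal projection onto h with respect to the trace form). Let φ : h → Matrix (Fin n) (Fin n) ℂ be a Lie algebra homomorphism (ℂ-linear with φ(⁅a,b⁆) = ⁅φ(a), φ(b)⁆), and set γ(η) := φ(π(η)). Then for every ξ ∈ h and every n×n matrix η: γ(exp(ξ)·η·exp(−ξ)) = exp(φ(ξ))·γ(η)·exp(−φ(ξ)). (This is the identity γ(Ad_X η) = Ad_{𝜸(X)} γ(η) for X = exp(ξ).) -/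
/-!
For `ξ ∈ h`, the trace form is `ad ξ`-invariant, so `ad ξ` preserves both `h` and its
trace-orthogonal complement; hence the projection `π` commutes with `ad ξ`, and
`γ = φ ∘ π` intertwines `ad ξ` with `ad (φ ξ)`. In the Banach algebra of operators on matrices an
intertwining `γ ∘ ad ξ = ad (φ ξ) ∘ γ` passes to the exponentials, and
`exp (ad x) = Ad (exp x)` because `ad x` is the difference of the commuting left and right
multiplications by `x`.
-/

open Matrix

noncomputable section

attribute [local instance 100] LieRing.ofAssociativeRing

open NormedSpace

namespace ContinuousLinearMap

/- Operators are taken `ℚ`-linear: `exp` only uses the `ℚ`-algebra structure, and so every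
real or complex Banach algebra is covered. -/
variable {A : Type*} [NormedRing A] [NormedAlgebra ℚ A]

def mulLeftRingHom : A →+* (A →L[ℚ] A) :=
  { NonUnitalAlgHom.Lmul ℚ A with map_one' := ext one_mul }

def mulRightRingHom : Aᵐᵒᵖ →+* (A →L[ℚ] A) where
  toFun x := (mul ℚ A).flip x.unop
  map_one' := ext mul_one
  map_mul' _ _ := ext fun _ => (mul_assoc _ _ _).symm
  map_zero' := ext mul_zero
  map_add' _ _ := ext fun _ => mul_add _ _ _

def ad (x : A) : A →L[ℚ] A := mul ℚ A x - (mul ℚ A).flip x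

@[simp] theorem ad_apply (x y : A) : ad x y = x * y - y * x := rfl

variable [CompleteSpace A]

theorem exp_mul_apply (x : A) : exp (mul ℚ A x) = mul ℚ A (exp x) :=
  (map_exp mulLeftRingHom (mul ℚ A).continuous x).symm

theorem exp_flip_mul_apply (x : A) : exp ((mul ℚ A).flip x) = (mul ℚ A).flip (exp x) := by
  have hmap := map_exp mulRightRingHom
    ((mul ℚ A).flip.continuous.comp MulOpposite.continuous_unop) (MulOpposite.op x)
  rw [exp_op] at hmap
  exact hmap.symm

theorem exp_ad (x : A) : exp (ad x) = mul ℚ A (exp x) * (mul ℚ A).flip (exp (-x)) := by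
  have hcomm : Commute (mul ℚ A x) (-(mul ℚ A).flip x) :=
    Commute.neg_right (ext fun y => (mul_assoc x y x).symm)
  rw [ad, sub_eq_add_neg, exp_add_of_commute hcomm, ← map_neg, exp_mul_apply,
    exp_flip_mul_apply]

theorem exp_ad_apply (x y : A) : exp (ad x) y = exp x * y * exp (-x) := by
  simp [exp_ad, mul_assoc]

theorem map_exp_mul_mul_exp_neg_of_map_ad (γ : A →L[ℚ] A) {x x' : A}
    (hγ : ∀ y, γ (x * y - y * x) = x' * γ y - γ y * x') (y : A) :
    γ (exp x * y * exp (-x)) = exp x' * γ y * exp (-x') := by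
  have hsemi : SemiconjBy γ (ad x) (ad x') := ext hγ
  simpa [exp_ad_apply] using congr($(hsemi.exp_right) y)

end ContinuousLinearMap

theorem Matrix.map_exp_mul_mul_exp_neg_of_map_lie {𝕜 m : Type*} [RCLike 𝕜] [Fintype m]
    [DecidableEq m] (γ : Matrix m m 𝕜 →ₗ[𝕜] Matrix m m 𝕜) {x x' : Matrix m m 𝕜}
    (hγ : ∀ y, γ ⁅x, y⁆ = ⁅x', γ y⁆) (y : Matrix m m 𝕜) :
    γ (exp x * y * exp (-x)) = exp x' * γ y * exp (-x') := by
  -- `exp` depends only on the topology, so any Banach-algebra norm inducing it will do.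
  let _ : NormedRing (Matrix m m 𝕜) := Matrix.linftyOpNormedRing
  let _ : NormedAlgebra ℚ (Matrix m m 𝕜) := Matrix.linftyOpNormedAlgebra
  have _ : @CompleteSpace (Matrix m m 𝕜) PseudoMetricSpace.toUniformSpace :=
    inferInstanceAs (CompleteSpace (m → m → 𝕜))
  exact ContinuousLinearMap.map_exp_mul_mul_exp_neg_of_map_ad
    ((LinearMap.toContinuousLinearMap γ).restrictScalars ℚ) hγ y

section TraceForm

variable {R m : Type*} [CommRing R] [Fintype m] [DecidableEq m]

theorem Matrix.trace_lie_mul (x θ y : Matrix m m R) :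
    trace (⁅x, θ⁆ * y) = trace (θ * ⁅y, x⁆) := by
  simp only [Ring.lie_def, sub_mul, mul_sub, trace_sub, mul_assoc]
  rw [trace_mul_comm x, mul_assoc]

structure LieSubalgebra.IsTraceOrthogonalProjection (h : LieSubalgebra R (Matrix m m R))
    (π : Matrix m m R →ₗ[R] Matrix m m R) : Prop where
  map_of_mem : ∀ x ∈ h, π x = x
  mem : ∀ η, π η ∈ h
  trace_sub_mul_eq_zero : ∀ η, ∀ y ∈ h, trace ((η - π η) * y) = 0
  eq_zero_of_trace_mul_eq_zero : ∀ θ, (∀ y ∈ h, trace (θ * y) = 0) → π θ = 0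

theorem LieSubalgebra.IsTraceOrthogonalProjection.map_lie {h : LieSubalgebra R (Matrix m m R)}
    {π : Matrix m m R →ₗ[R] Matrix m m R} (hπ : h.IsTraceOrthogonalProjection π)
    {ξ : Matrix m m R} (hξ : ξ ∈ h) (η : Matrix m m R) : π ⁅ξ, η⁆ = ⁅ξ, π η⁆ := by
  have h_in : π ⁅ξ, π η⁆ = ⁅ξ, π η⁆ := hπ.map_of_mem _ (h.lie_mem hξ (hπ.mem η))
  have h_perp : π ⁅ξ, η - π η⁆ = 0 := hπ.eq_zero_of_trace_mul_eq_zero _ fun y hy => by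
    rw [trace_lie_mul]
    exact hπ.trace_sub_mul_eq_zero η _ (h.lie_mem hy hξ)
  rw [← add_sub_cancel (π η) η, lie_add, map_add, h_in, h_perp, add_zero, add_sub_cancel]

end TraceForm

/-- Let `π` be the orthogonal projection (w.r.t. the trace form) of `n×n` complex matrices onto a
Lie subalgebra `h`, let `φ : h → gl_n(ℂ)` be a Lie algebra homomorphism, and set
`γ(η) = φ(π(η))`. Then `γ(Ad_{exp ξ} η) = Ad_{exp (φ ξ)} (γ η)` for all `ξ ∈ h` and all `η`. -/
theorem gamma_ad_exp {n : ℕ}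
    (h : LieSubalgebra ℂ (Matrix (Fin n) (Fin n) ℂ))
    (π : Matrix (Fin n) (Fin n) ℂ →ₗ[ℂ] Matrix (Fin n) (Fin n) ℂ)
    (hπ₁ : ∀ x ∈ h, π x = x)
    (hπ₂ : ∀ η : Matrix (Fin n) (Fin n) ℂ, π η ∈ h)
    (hπ₃ : ∀ η : Matrix (Fin n) (Fin n) ℂ, ∀ y ∈ h, Matrix.trace ((η - π η) * y) = 0)
    (hπ₄ : ∀ θ : Matrix (Fin n) (Fin n) ℂ,
      (∀ y ∈ h, Matrix.trace (θ * y) = 0) → π θ = 0)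
    (φ : h →ₗ⁅ℂ⁆ Matrix (Fin n) (Fin n) ℂ) :
    ∀ (ξ : h) (η : Matrix (Fin n) (Fin n) ℂ),
      φ ⟨π (NormedSpace.exp (ξ : Matrix (Fin n) (Fin n) ℂ) * η *
            NormedSpace.exp (-(ξ : Matrix (Fin n) (Fin n) ℂ))), hπ₂ _⟩
        = NormedSpace.exp (φ ξ) * φ ⟨π η, hπ₂ η⟩ * NormedSpace.exp (-(φ ξ)) := by
  intro ξ η
  have hπ : h.IsTraceOrthogonalProjection π := ⟨hπ₁, hπ₂, hπ₃, hπ₄⟩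
  let π' := π.codRestrict h.toSubmodule hπ₂
  refine Matrix.map_exp_mul_mul_exp_neg_of_map_lie ((φ : h →ₗ[ℂ] _) ∘ₗ π') (fun μ => ?_) η
  have hπ' : π' ⁅(ξ : Matrix (Fin n) (Fin n) ℂ), μ⁆ = ⁅ξ, π' μ⁆ :=
    Subtype.ext (hπ.map_lie ξ.2 μ)
  exact congr(φ $hπ').trans (φ.map_lie ξ (π' μ))
end
end

section
/- Let X be an n×n matrix over a commutative ring with det X = 1. Index rows and columns by 1,…,n and define the dual matrix X† by (X†)_{ij} = (−1)^{i+j}·adj(X)_{n+1−j, n+1−i}, where adj(X) is the adjugate of X (equivalently, X† is obtained by conjugating the cofactor matrix of X by w₀·J, where w₀ is the antidiagonal permutation matrix and J = diag((−1)ⁱ)). Then for any subsets I, J ⊆ {1,…,n} with |I| = |J|, the minor of X with row set I and column set J (rows and columns taken in increasing order) equals the minor of X† with row set {1,…,n} ∖ {n+1−i : i ∈ I} and column set {1,…,n} ∖ {n+1−j : j ∈ J}: det X_I^J = det (X†)_{\overline{w₀I}}^{\overline{w₀J}}. -/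
open Matrix

noncomputable section

/-- The dual matrix `X†`, with `(X†)_{ij} = (−1)^{i+j}·adj(X)_{n+1−j, n+1−i}` (conjugation of the
cofactor matrix by `w₀·J`). -/
def dualMatrix {n : ℕ} {R : Type*} [CommRing R] (X : Matrix (Fin n) (Fin n) R) :
    Matrix (Fin n) (Fin n) R :=
  Matrix.of fun i j => (-1 : R) ^ ((i : ℕ) + (j : ℕ)) * X.adjugate (Fin.rev j) (Fin.rev i)

namespace JacobiAux

variable {n k : ℕ}

lemma card_compl_eq (I : Finset (Fin n)) (hI : I.card = k) : Iᶜ.card = n - k := by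
  simp [Finset.card_compl, hI]

lemma splitFun_bijective (I : Finset (Fin n)) (hI : I.card = k) :
    Function.Bijective (Sum.elim (fun a : Fin k => (I.orderIsoOfFin hI a : Fin n))
      (fun b : Fin (n - k) => (Iᶜ.orderIsoOfFin (card_compl_eq I hI) b : Fin n))) := by
  have hkn : k ≤ n := by rw [← hI]; simpa using I.card_le_univ
  rw [Fintype.bijective_iff_injective_and_card]
  constructor
  · rintro (a | a) (b | b) h <;> simp only [Sum.elim_inl, Sum.elim_inr] at h
    · have := (I.orderIsoOfFin hI).injective (Subtype.coe_injective h)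
      rw [this]
    · exfalso
      have h1 : (I.orderIsoOfFin hI a : Fin n) ∈ I := (I.orderIsoOfFin hI a).2
      have h2 : (Iᶜ.orderIsoOfFin (card_compl_eq I hI) b : Fin n) ∈ Iᶜ :=
        (Iᶜ.orderIsoOfFin (card_compl_eq I hI) b).2
      rw [h] at h1
      exact (Finset.mem_compl.1 h2) h1
    · exfalso
      have h1 : (I.orderIsoOfFin hI b : Fin n) ∈ I := (I.orderIsoOfFin hI b).2
      have h2 : (Iᶜ.orderIsoOfFin (card_compl_eq I hI) a : Fin n) ∈ Iᶜ :=
        (Iᶜ.orderIsoOfFin (card_compl_eq I hI) a).2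
      rw [h] at h2
      exact (Finset.mem_compl.1 h2) h1
    · have := (Iᶜ.orderIsoOfFin (card_compl_eq I hI)).injective (Subtype.coe_injective h)
      rw [this]
  · simp [Fintype.card_sum]; omega

def splitEquiv (I : Finset (Fin n)) (hI : I.card = k) : (Fin k ⊕ Fin (n - k)) ≃ Fin n :=
  Equiv.ofBijective _ (splitFun_bijective I hI)

@[simp] lemma splitEquiv_inl (I : Finset (Fin n)) (hI : I.card = k) (a : Fin k) :
    splitEquiv I hI (Sum.inl a) = (I.orderIsoOfFin hI a : Fin n) := rfl

@[simp] lemma splitEquiv_inr (I : Finset (Fin n)) (hI : I.card = k) (b : Fin (n - k)) :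
    splitEquiv I hI (Sum.inr b) = (Iᶜ.orderIsoOfFin (card_compl_eq I hI) b : Fin n) := rfl




lemma orderIso_congr {S S' : Finset (Fin n)} (h : S = S') {c : ℕ} (hS : S.card = c)
    (hS' : S'.card = c) (t : Fin c) :
    (S.orderIsoOfFin hS t : Fin n) = (S'.orderIsoOfFin hS' t : Fin n) := by
  subst h; rfl

lemma compl_image_rev (S : Finset (Fin n)) : (S.image Fin.rev)ᶜ = Sᶜ.image Fin.rev := by
  ext x
  simp only [Finset.mem_compl, Finset.mem_image]
  constructor
  · intro h
    exact ⟨x.rev, fun hc => h ⟨x.rev, hc, Fin.rev_rev x⟩, Fin.rev_rev x⟩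
  · rintro ⟨y, hy, rfl⟩ ⟨z, hz, hzy⟩
    exact hy (by rwa [← Fin.rev_injective hzy])

lemma sum_compl_image_rev (S : Finset (Fin n)) :
    (∑ x ∈ (S.image Fin.rev)ᶜ, (x : ℕ)) + ∑ x ∈ S, (x : ℕ)
        + 2 * ∑ x ∈ S, ((Fin.rev x : Fin n) : ℕ)
      = (∑ x : Fin n, (x : ℕ)) + S.card * (n - 1) := by
  have h1 : (∑ x ∈ S.image Fin.rev, (x : ℕ)) + ∑ x ∈ (S.image Fin.rev)ᶜ, (x : ℕ)
      = ∑ x : Fin n, (x : ℕ) := Finset.sum_add_sum_compl _ _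
  have h2 : (∑ x ∈ S.image Fin.rev, (x : ℕ)) = ∑ x ∈ S, ((Fin.rev x : Fin n) : ℕ) :=
    Finset.sum_image (fun x _ y _ h => Fin.rev_injective h)
  have h3 : (∑ x ∈ S, ((x : ℕ) + ((Fin.rev x : Fin n) : ℕ))) = S.card * (n - 1) := by
    have hterm : ∀ x ∈ S, (x : ℕ) + ((Fin.rev x : Fin n) : ℕ) = n - 1 := by
      intro x _
      have := x.isLt
      have hrev : ((Fin.rev x : Fin n) : ℕ) = n - (x + 1) := Fin.val_rev x
      omega
    rw [Finset.sum_congr rfl hterm, Finset.sum_const, smul_eq_mul]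
  rw [Finset.sum_add_distrib] at h3
  omega

lemma card_insert_erase {S : Finset (Fin n)} {c : ℕ} (hS : S.card = c)
    {a b : Fin n} (ha : a ∈ S) (hb : b ∉ S) :
    (insert b (S.erase a)).card = c := by
  rw [Finset.card_insert_of_notMem (fun h => hb (Finset.mem_of_mem_erase h)),
    Finset.card_erase_of_mem ha]
  have : 1 ≤ S.card := Finset.card_pos.2 ⟨a, ha⟩
  omega

/-- Replacing `a ∈ S` by an adjacent `b ∉ S` changes the sorted parametrization by `swap a b`. -/
lemma orderIso_insert_erase {S : Finset (Fin n)} {c : ℕ} (hS : S.card = c)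
    {a b : Fin n} (hadj : (b : ℕ) + 1 = (a : ℕ) ∨ (a : ℕ) + 1 = (b : ℕ))
    (ha : a ∈ S) (hb : b ∉ S)
    (hS' : (insert b (S.erase a)).card = c) (t : Fin c) :
    ((insert b (S.erase a)).orderIsoOfFin hS' t : Fin n)
      = Equiv.swap a b (S.orderIsoOfFin hS t : Fin n) := by
  have hab : a ≠ b := by intro h; rw [Fin.ext_iff] at h; omega
  set f : Fin c → Fin n := fun t => Equiv.swap a b (S.orderIsoOfFin hS t : Fin n) with hf
  have key : ∀ s : Fin c, (S.orderIsoOfFin hS s : Fin n) = a → f s = b := by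
    intro s hs
    simp only [hf, hs, Equiv.swap_apply_left]
  have key2 : ∀ s : Fin c, (S.orderIsoOfFin hS s : Fin n) ≠ a →
      f s = (S.orderIsoOfFin hS s : Fin n) := by
    intro s hs
    have hv : (S.orderIsoOfFin hS s : Fin n) ∈ S := (S.orderIsoOfFin hS s).2
    have hvb : (S.orderIsoOfFin hS s : Fin n) ≠ b := fun h => hb (h ▸ hv)
    simp only [hf]
    exact Equiv.swap_apply_of_ne_of_ne hs hvb
  have hmem : ∀ t, f t ∈ insert b (S.erase a) := by
    intro t
    by_cases hva : (S.orderIsoOfFin hS t : Fin n) = a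
    · rw [key t hva]; exact Finset.mem_insert_self _ _
    · rw [key2 t hva]
      exact Finset.mem_insert_of_mem
        (Finset.mem_erase.2 ⟨hva, (S.orderIsoOfFin hS t).2⟩)
  have hmono : StrictMono f := by
    intro s t hst
    have hvw : (S.orderIsoOfFin hS s : Fin n) < (S.orderIsoOfFin hS t : Fin n) :=
      (S.orderIsoOfFin hS).strictMono hst
    have hv : (S.orderIsoOfFin hS s : Fin n) ∈ S := (S.orderIsoOfFin hS s).2
    have hw : (S.orderIsoOfFin hS t : Fin n) ∈ S := (S.orderIsoOfFin hS t).2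
    have hvb : ((S.orderIsoOfFin hS s : Fin n) : ℕ) ≠ (b : ℕ) :=
      fun h => hb ((Fin.ext h : (S.orderIsoOfFin hS s : Fin n) = b) ▸ hv)
    have hwb : ((S.orderIsoOfFin hS t : Fin n) : ℕ) ≠ (b : ℕ) :=
      fun h => hb ((Fin.ext h : (S.orderIsoOfFin hS t : Fin n) = b) ▸ hw)
    rw [Fin.lt_def] at hvw
    by_cases hva : (S.orderIsoOfFin hS s : Fin n) = a
    · have hwa : (S.orderIsoOfFin hS t : Fin n) ≠ a := by
        intro h; rw [h, hva] at hvw; omega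
      rw [key s hva, key2 t hwa]
      have hva' : ((S.orderIsoOfFin hS s : Fin n) : ℕ) = (a : ℕ) := by rw [hva]
      have hwa' : ((S.orderIsoOfFin hS t : Fin n) : ℕ) ≠ (a : ℕ) :=
        fun h => hwa (Fin.ext h)
      rw [Fin.lt_def]
      omega
    · by_cases hwa : (S.orderIsoOfFin hS t : Fin n) = a
      · rw [key2 s hva, key t hwa]
        have hwa' : ((S.orderIsoOfFin hS t : Fin n) : ℕ) = (a : ℕ) := by rw [hwa]
        have hva' : ((S.orderIsoOfFin hS s : Fin n) : ℕ) ≠ (a : ℕ) :=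
          fun h => hva (Fin.ext h)
        rw [Fin.lt_def]
        omega
      · rw [key2 s hva, key2 t hwa]
        exact hvw
  have huniq := Finset.orderEmbOfFin_unique hS' hmem hmono
  have : ((insert b (S.erase a)).orderIsoOfFin hS' t : Fin n)
      = (insert b (S.erase a)).orderEmbOfFin hS' t := by
    simp [Finset.coe_orderIsoOfFin_apply]
  rw [this, ← huniq]

lemma orderIso_image_rev {S : Finset (Fin n)} {c : ℕ} (hS : S.card = c)
    (h' : (S.image Fin.rev).card = c) (t : Fin c) :
    ((S.image Fin.rev).orderIsoOfFin h' t : Fin n)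
      = Fin.rev (S.orderIsoOfFin hS t.rev : Fin n) := by
  set f : Fin c → Fin n := fun t => Fin.rev (S.orderIsoOfFin hS t.rev : Fin n) with hf
  have hmem : ∀ t, f t ∈ S.image Fin.rev :=
    fun t => Finset.mem_image_of_mem _ (S.orderIsoOfFin hS t.rev).2
  have hmono : StrictMono f := by
    intro s t hst
    have h1 : t.rev < s.rev := Fin.rev_lt_rev.2 hst
    have h2 : (S.orderIsoOfFin hS t.rev : Fin n) < (S.orderIsoOfFin hS s.rev : Fin n) :=
      (S.orderIsoOfFin hS).strictMono h1
    exact Fin.rev_lt_rev.2 h2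
  have huniq := Finset.orderEmbOfFin_unique h' hmem hmono
  have : ((S.image Fin.rev).orderIsoOfFin h' t : Fin n)
      = (S.image Fin.rev).orderEmbOfFin h' t := by
    simp [Finset.coe_orderIsoOfFin_apply]
  rw [this, ← huniq]

/-- The split equivalence changes by a swap under an adjacent move. -/
lemma splitEquiv_insert_erase (I : Finset (Fin n)) (hI : I.card = k)
    {a b : Fin n} (hadj : (b : ℕ) + 1 = (a : ℕ)) (ha : a ∈ I) (hb : b ∉ I)
    (hI' : (insert b (I.erase a)).card = k) :
    splitEquiv (insert b (I.erase a)) hI' = (splitEquiv I hI).trans (Equiv.swap a b) := by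
  have hab : a ≠ b := by intro h; rw [Fin.ext_iff] at h; omega
  apply Equiv.ext
  rintro (t | t)
  · simpa using orderIso_insert_erase hI (Or.inl hadj) ha hb hI' t
  · simp only [splitEquiv_inr, Equiv.trans_apply]
    have hcompl : (insert b (I.erase a))ᶜ = insert a (Iᶜ.erase b) := by
      rw [Finset.compl_insert, Finset.compl_erase, Finset.erase_insert_of_ne hab]
    rw [orderIso_congr hcompl _ (by rw [← hcompl]; exact card_compl_eq _ hI') t,
      orderIso_insert_erase (card_compl_eq I hI) (Or.inr hadj)
        (Finset.mem_compl.2 hb) (by simp [ha]) _ t, Equiv.swap_comm]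

/-- The base equivalence `Fin k ⊕ Fin (n-k) ≃ Fin n`. -/
def e0 (h : k ≤ n) : (Fin k ⊕ Fin (n - k)) ≃ Fin n :=
  finSumFinEquiv.trans (finCongr (by omega))

/-- The "unshuffle" permutation associated to `I`. -/
def splitPerm (h : k ≤ n) (I : Finset (Fin n)) (hI : I.card = k) : Equiv.Perm (Fin n) :=
  (e0 h).symm.trans (splitEquiv I hI)

/-- The initial segment `{0, …, k-1}` as a finset of `Fin n`. -/
def Ik (h : k ≤ n) : Finset (Fin n) :=
  (Finset.univ : Finset (Fin k)).map (Fin.castLEEmb h)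

lemma card_Ik (h : k ≤ n) : (Ik h).card = k := by simp [Ik]

lemma mem_Ik {h : k ≤ n} {x : Fin n} : x ∈ Ik h ↔ (x : ℕ) < k := by
  constructor
  · rintro hx
    rw [Ik, Finset.mem_map] at hx
    obtain ⟨y, -, rfl⟩ := hx
    simpa [Fin.castLEEmb] using y.isLt
  · intro hx
    rw [Ik, Finset.mem_map]
    exact ⟨⟨(x : ℕ), hx⟩, Finset.mem_univ _, Fin.ext (by simp)⟩

lemma no_move_eq_Ik (hkn : k ≤ n) (I : Finset (Fin n)) (hI : I.card = k)
    (h : ∀ a ∈ I, ∀ b : Fin n, (b : ℕ) + 1 = (a : ℕ) → b ∈ I) : I = Ik hkn := by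
  have down : ∀ d : ℕ, ∀ a ∈ I, ∀ b : Fin n, (b : ℕ) + d = (a : ℕ) → b ∈ I := by
    intro d
    induction d with
    | zero => intro a ha b hb; have : b = a := Fin.ext (by omega); rwa [this]
    | succ d ih =>
      intro a ha b hb
      have hlt : (b : ℕ) + d < n := by have := a.2; omega
      have hc : (⟨(b : ℕ) + d, hlt⟩ : Fin n) ∈ I := h a ha _ (by simp; omega)
      exact ih _ hc b (by simp)
  have hbound : ∀ x ∈ I, (x : ℕ) < k := by
    intro x hx
    have hsub : Finset.Iic x ⊆ I := by
      intro y hy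
      have hyx : (y : ℕ) ≤ (x : ℕ) := by
        have := Finset.mem_Iic.1 hy; rwa [Fin.le_def] at this
      exact down ((x : ℕ) - (y : ℕ)) x hx y (by omega)
    have hcard := Finset.card_le_card hsub
    rw [Fin.card_Iic, hI] at hcard
    omega
  exact Finset.eq_of_subset_of_card_le (fun x hx => mem_Ik.2 (hbound x hx))
    (by rw [card_Ik, hI])

lemma sum_insert_erase (I : Finset (Fin n)) {a b : Fin n}
    (hadj : (b : ℕ) + 1 = (a : ℕ)) (ha : a ∈ I) (hb : b ∉ I) :
    (∑ x ∈ insert b (I.erase a), (x : ℕ)) + 1 = ∑ x ∈ I, (x : ℕ) := by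
  rw [Finset.sum_insert (fun hmem => hb (Finset.mem_of_mem_erase hmem))]
  have h2 : (a : ℕ) + ∑ x ∈ I.erase a, (x : ℕ) = ∑ x ∈ I, (x : ℕ) :=
    Finset.add_sum_erase I (fun x : Fin n => (x : ℕ)) ha
  omega

/-- Constancy of `sign(splitPerm I) · (−1)^{Σ I}`. -/
lemma signTerm_eq (hkn : k ≤ n) (I : Finset (Fin n)) (hI : I.card = k) :
    Equiv.Perm.sign (splitPerm hkn I hI) * (-1 : ℤˣ) ^ (∑ x ∈ I, (x : ℕ))
      = Equiv.Perm.sign (splitPerm hkn (Ik hkn) (card_Ik hkn))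
          * (-1 : ℤˣ) ^ (∑ x ∈ Ik hkn, (x : ℕ)) := by
  generalize hs : (∑ x ∈ I, (x : ℕ)) = s
  induction s using Nat.strong_induction_on generalizing I with
  | _ s ih =>
    by_cases hIk : I = Ik hkn
    · subst hIk
      rw [Subsingleton.elim hI (card_Ik hkn), hs]
    · have hmove : ∃ a ∈ I, ∃ b : Fin n, (b : ℕ) + 1 = (a : ℕ) ∧ b ∉ I := by
        by_contra hcon
        push_neg at hcon
        exact hIk (no_move_eq_Ik hkn I hI hcon)
      obtain ⟨a, ha, b, hadj, hb⟩ := hmove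
      have hI' : (insert b (I.erase a)).card = k := card_insert_erase hI ha hb
      have hsum := sum_insert_erase I hadj ha hb
      have hperm : splitPerm hkn (insert b (I.erase a)) hI'
          = Equiv.swap a b * splitPerm hkn I hI := by
        rw [splitPerm, splitEquiv_insert_erase I hI hadj ha hb hI']
        rfl
      have hab : a ≠ b := by intro h; rw [Fin.ext_iff] at h; omega
      have hstep := ih (s - 1) (by omega) (insert b (I.erase a)) hI' (by omega)
      rw [← hstep, hperm, _root_.map_mul, Equiv.Perm.sign_swap hab]
      have hs1 : s = (s - 1) + 1 := by omega
      rw [hs1, pow_succ]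
      simp [mul_comm, mul_left_comm, mul_assoc]

/-- The combined sign formula. -/
lemma sign_split_mul (hkn : k ≤ n) (I J : Finset (Fin n)) (hI : I.card = k) (hJ : J.card = k) :
    Equiv.Perm.sign ((splitEquiv J hJ).trans (splitEquiv I hI).symm)
      = (-1 : ℤˣ) ^ (∑ x ∈ I, (x : ℕ) + ∑ x ∈ J, (x : ℕ)) := by
  have hcongr : Equiv.permCongr (e0 hkn) ((splitEquiv J hJ).trans (splitEquiv I hI).symm)
      = (splitPerm hkn J hJ).trans (splitPerm hkn I hI).symm := Equiv.ext fun x => rfl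
  have h1 : Equiv.Perm.sign ((splitEquiv J hJ).trans (splitEquiv I hI).symm)
      = Equiv.Perm.sign (splitPerm hkn I hI) * Equiv.Perm.sign (splitPerm hkn J hJ) := by
    rw [← Equiv.Perm.sign_permCongr (e0 hkn), hcongr]
    have : (splitPerm hkn J hJ).trans (splitPerm hkn I hI).symm
        = (splitPerm hkn I hI).symm * (splitPerm hkn J hJ) := rfl
    rw [this, _root_.map_mul, Equiv.Perm.sign_symm]
  rw [h1]
  have hprod : (Equiv.Perm.sign (splitPerm hkn I hI) * (-1 : ℤˣ) ^ (∑ x ∈ I, (x : ℕ)))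
      * (Equiv.Perm.sign (splitPerm hkn J hJ) * (-1 : ℤˣ) ^ (∑ x ∈ J, (x : ℕ))) = 1 := by
    rw [signTerm_eq hkn I hI, signTerm_eq hkn J hJ]
    exact Int.units_mul_self _
  rw [mul_mul_mul_comm, ← pow_add] at hprod
  set u := Equiv.Perm.sign (splitPerm hkn I hI) * Equiv.Perm.sign (splitPerm hkn J hJ)
  set v := (-1 : ℤˣ) ^ (∑ x ∈ I, (x : ℕ) + ∑ x ∈ J, (x : ℕ))
  have hv : v * v = 1 := Int.units_mul_self v
  conv_lhs => rw [show u = (u * v) * v by rw [mul_assoc, hv, mul_one]]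
  rw [hprod, one_mul]

/-- Key block computation: if `M * N = det M • 1`, then
`det M * det N₂₂ = det M₁₁ * (det M)^m`. -/
lemma block_key {m : ℕ} {R : Type*} [CommRing R]
    (M N : Matrix (Fin k ⊕ Fin m) (Fin k ⊕ Fin m) R)
    (h : M * N = M.det • 1) :
    M.det * (N.toBlocks₂₂).det = (M.toBlocks₁₁).det * M.det ^ m := by
  have hM : M = fromBlocks M.toBlocks₁₁ M.toBlocks₁₂ M.toBlocks₂₁ M.toBlocks₂₂ :=
    (fromBlocks_toBlocks M).symm
  have hN : N = fromBlocks N.toBlocks₁₁ N.toBlocks₁₂ N.toBlocks₂₁ N.toBlocks₂₂ :=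
    (fromBlocks_toBlocks N).symm
  have h' : fromBlocks
        (M.toBlocks₁₁ * N.toBlocks₁₁ + M.toBlocks₁₂ * N.toBlocks₂₁)
        (M.toBlocks₁₁ * N.toBlocks₁₂ + M.toBlocks₁₂ * N.toBlocks₂₂)
        (M.toBlocks₂₁ * N.toBlocks₁₁ + M.toBlocks₂₂ * N.toBlocks₂₁)
        (M.toBlocks₂₁ * N.toBlocks₁₂ + M.toBlocks₂₂ * N.toBlocks₂₂)
      = fromBlocks (M.det • 1) 0 0 (M.det • 1) := by
    rw [← fromBlocks_multiply, ← hM, ← hN, h, ← fromBlocks_one, fromBlocks_smul, smul_zero]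
    rw [smul_zero]
  have h12 : M.toBlocks₁₁ * N.toBlocks₁₂ + M.toBlocks₁₂ * N.toBlocks₂₂ = 0 := by
    have := congrArg Matrix.toBlocks₁₂ h'
    simpa [toBlocks_fromBlocks₁₂] using this
  have h22 : M.toBlocks₂₁ * N.toBlocks₁₂ + M.toBlocks₂₂ * N.toBlocks₂₂ = M.det • 1 := by
    have := congrArg Matrix.toBlocks₂₂ h'
    simpa [toBlocks_fromBlocks₂₂] using this
  have hprod : M * fromBlocks 1 N.toBlocks₁₂ 0 N.toBlocks₂₂
      = fromBlocks M.toBlocks₁₁ 0 M.toBlocks₂₁ (M.det • 1) := by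
    conv_lhs => rw [hM]
    rw [fromBlocks_multiply]
    simp only [Matrix.mul_one, Matrix.mul_zero, add_zero, h12, h22]
  have hdet := congrArg Matrix.det hprod
  rw [det_mul, det_fromBlocks_zero₂₁, det_fromBlocks_zero₁₂, det_one, one_mul,
    det_smul, det_one, mul_one, Fintype.card_fin] at hdet
  exact hdet


end JacobiAux

open JacobiAux in
/-- Jacobi's complementary minor formula: for `det X = 1`,
`det X_I^J = det (X†)_{complement of w₀I}^{complement of w₀J}`. -/
theorem jacobi_complementary_minor {n k : ℕ} {R : Type*} [CommRing R]
    (X : Matrix (Fin n) (Fin n) R) (hX : X.det = 1)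
    (I J : Finset (Fin n)) (hI : I.card = k) (hJ : J.card = k) :
    (X.submatrix (fun a : Fin k => (I.orderIsoOfFin hI a : Fin n))
        (fun b : Fin k => (J.orderIsoOfFin hJ b : Fin n))).det
      = ((dualMatrix X).submatrix
          (fun a : Fin (n - k) => (((I.image Fin.rev)ᶜ).orderIsoOfFin
            (by
              rw [Finset.card_compl, Finset.card_image_of_injective _ Fin.rev_injective, hI,
                Fintype.card_fin]) a : Fin n))
          (fun b : Fin (n - k) => (((J.image Fin.rev)ᶜ).orderIsoOfFin
            (by
              rw [Finset.card_compl, Finset.card_image_of_injective _ Fin.rev_injective, hJ,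
                Fintype.card_fin]) b : Fin n))).det := by
  classical
  have hkn : k ≤ n := by rw [← hI]; simpa using I.card_le_univ
  set m := n - k with hm
  set eI := splitEquiv I hI with heI
  set eJ := splitEquiv J hJ with heJ
  set M : Matrix (Fin k ⊕ Fin m) (Fin k ⊕ Fin m) R := X.submatrix eI eJ with hMdef
  set τ : Equiv.Perm (Fin k ⊕ Fin m) := eJ.trans eI.symm with hτdef
  set ε : R := ((Equiv.Perm.sign τ : ℤ) : R) with hεdef
  have hε2 : ε * ε = 1 := by
    rw [hεdef, ← Int.cast_mul, ← Units.val_mul, Int.units_mul_self, Units.val_one, Int.cast_one]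
  -- determinant of M
  have hMτ : M = (X.submatrix eI eI).submatrix id τ := by
    ext p q
    simp [hMdef, hτdef, Matrix.submatrix_apply]
  have hdetM : M.det = ε := by
    rw [hMτ, Matrix.det_permute' τ, Matrix.det_submatrix_equiv_self, hX, mul_one, hεdef]
  -- the companion matrix N
  set N : Matrix (Fin k ⊕ Fin m) (Fin k ⊕ Fin m) R :=
    Matrix.of fun p q => ε * X.adjugate (eJ p) (eI q) with hNdef
  have hMN : M * N = M.det • 1 := by
    ext p q
    rw [hdetM]
    simp only [Matrix.mul_apply, Matrix.smul_apply, hNdef, Matrix.of_apply, hMdef,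
      Matrix.submatrix_apply, smul_eq_mul]
    have hsum : ∑ r, X (eI p) (eJ r) * (ε * X.adjugate (eJ r) (eI q))
        = ε * ∑ j, X (eI p) j * X.adjugate j (eI q) := by
      rw [Finset.mul_sum]
      rw [← Equiv.sum_comp eJ (fun j => ε * (X (eI p) j * X.adjugate j (eI q)))]
      exact Finset.sum_congr rfl fun r _ => by ring
    rw [hsum]
    have hadj : ∑ j, X (eI p) j * X.adjugate j (eI q)
        = (1 : Matrix (Fin n) (Fin n) R) (eI p) (eI q) := by
      have := Matrix.mul_adjugate X
      rw [hX, one_smul] at this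
      calc ∑ j, X (eI p) j * X.adjugate j (eI q)
          = (X * X.adjugate) (eI p) (eI q) := by rw [Matrix.mul_apply]
        _ = (1 : Matrix (Fin n) (Fin n) R) (eI p) (eI q) := by rw [this]
    rw [hadj]
    simp [Matrix.one_apply, EmbeddingLike.apply_eq_iff_eq]
  have hkey := block_key M N hMN
  -- identify the blocks
  have h11 : M.toBlocks₁₁ = X.submatrix (fun a : Fin k => (I.orderIsoOfFin hI a : Fin n))
      (fun b : Fin k => (J.orderIsoOfFin hJ b : Fin n)) := rfl
  set L : Matrix (Fin m) (Fin m) R :=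
    Matrix.of fun a b => X.adjugate ((Jᶜ.orderIsoOfFin (card_compl_eq J hJ) a : Fin n))
      ((Iᶜ.orderIsoOfFin (card_compl_eq I hI) b : Fin n)) with hLdef
  have h22 : N.toBlocks₂₂ = Matrix.of fun a b => ε * L a b := rfl
  have hdet22 : (N.toBlocks₂₂).det = ε ^ m * L.det := by
    have : N.toBlocks₂₂ = ε • L := by
      ext a b; simp [h22, hLdef, Matrix.smul_apply, smul_eq_mul]
    rw [this, Matrix.det_smul, Fintype.card_fin]
  rw [hdetM, hdet22, h11] at hkey
  -- hkey : ε * (ε ^ m * L.det) = lhs * ε ^ m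
  have hpow : ε ^ m * ε ^ m = 1 := by rw [← mul_pow, hε2, one_pow]
  have hmain : (X.submatrix (fun a : Fin k => (I.orderIsoOfFin hI a : Fin n))
      (fun b : Fin k => (J.orderIsoOfFin hJ b : Fin n))).det = ε * L.det := by
    set lhs := (X.submatrix (fun a : Fin k => (I.orderIsoOfFin hI a : Fin n))
      (fun b : Fin k => (J.orderIsoOfFin hJ b : Fin n))).det
    calc lhs = (lhs * ε ^ m) * ε ^ m := by rw [mul_assoc, hpow, mul_one]
      _ = (ε * (ε ^ m * L.det)) * ε ^ m := by rw [← hkey]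
      _ = (ε * L.det) * (ε ^ m * ε ^ m) := by ring
      _ = ε * L.det := by rw [hpow, mul_one]
  rw [hmain]
  -- now handle the right-hand side
  set cI : Fin m → Fin n := fun b => (Iᶜ.orderIsoOfFin (card_compl_eq I hI) b : Fin n) with hcI
  set cJ : Fin m → Fin n := fun b => (Jᶜ.orderIsoOfFin (card_compl_eq J hJ) b : Fin n) with hcJ
  have pfI : ((I.image Fin.rev)ᶜ).card = n - k := by
    rw [Finset.card_compl, Finset.card_image_of_injective _ Fin.rev_injective, hI,
      Fintype.card_fin]
  have pfJ : ((J.image Fin.rev)ᶜ).card = n - k := by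
    rw [Finset.card_compl, Finset.card_image_of_injective _ Fin.rev_injective, hJ,
      Fintype.card_fin]
  have hfI : ∀ a : Fin m, (((I.image Fin.rev)ᶜ).orderIsoOfFin pfI a : Fin n)
      = Fin.rev (cI a.rev) := by
    intro a
    rw [orderIso_congr (compl_image_rev I) pfI
      (by rw [← compl_image_rev I]; exact pfI) a,
      orderIso_image_rev (card_compl_eq I hI) _ a]
  have hfJ : ∀ b : Fin m, (((J.image Fin.rev)ᶜ).orderIsoOfFin pfJ b : Fin n)
      = Fin.rev (cJ b.rev) := by
    intro b
    rw [orderIso_congr (compl_image_rev J) pfJ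
      (by rw [← compl_image_rev J]; exact pfJ) b,
      orderIso_image_rev (card_compl_eq J hJ) _ b]
  have hsub : ((dualMatrix X).submatrix
        (fun a : Fin (n - k) => (((I.image Fin.rev)ᶜ).orderIsoOfFin pfI a : Fin n))
        (fun b : Fin (n - k) => (((J.image Fin.rev)ᶜ).orderIsoOfFin pfJ b : Fin n)))
      = ((dualMatrix X).submatrix (fun a : Fin m => Fin.rev (cI a))
          (fun b : Fin m => Fin.rev (cJ b))).submatrix Fin.revPerm Fin.revPerm := by
    ext a b
    simp only [Matrix.submatrix_apply, hfI a, hfJ b]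
    rfl
  rw [show ((dualMatrix X).submatrix
        (fun a : Fin (n - k) => (((I.image Fin.rev)ᶜ).orderIsoOfFin (by
              rw [Finset.card_compl, Finset.card_image_of_injective _ Fin.rev_injective, hI,
                Fintype.card_fin]) a : Fin n))
        (fun b : Fin (n - k) => (((J.image Fin.rev)ᶜ).orderIsoOfFin (by
              rw [Finset.card_compl, Finset.card_image_of_injective _ Fin.rev_injective, hJ,
                Fintype.card_fin]) b : Fin n)))
      = ((dualMatrix X).submatrix (fun a : Fin m => Fin.rev (cI a))
          (fun b : Fin m => Fin.rev (cJ b))).submatrix Fin.revPerm Fin.revPerm from hsub,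
    Matrix.det_submatrix_equiv_self]
  -- express the reindexed dual matrix through L
  set uI : Fin m → R := fun a => (-1 : R) ^ ((Fin.rev (cI a) : Fin n) : ℕ) with huI
  set uJ : Fin m → R := fun b => (-1 : R) ^ ((Fin.rev (cJ b) : Fin n) : ℕ) with huJ
  have hP : (dualMatrix X).submatrix (fun a : Fin m => Fin.rev (cI a))
      (fun b : Fin m => Fin.rev (cJ b))
      = Matrix.of (fun a b => uI a *
          (Matrix.of (fun a b => uJ b * L.transpose a b)) a b) := by
    ext a b
    simp only [Matrix.submatrix_apply, dualMatrix, Matrix.of_apply, Matrix.transpose_apply,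
      hLdef, huI, huJ, Fin.rev_rev]
    rw [pow_add]
    ring
  rw [hP, Matrix.det_mul_column, Matrix.det_mul_row, Matrix.det_transpose]
  -- turn the products of signs into powers of (-1)
  have hprodI : (∏ a, uI a) = (-1 : R) ^ (∑ y ∈ (I.image Fin.rev)ᶜ, (y : ℕ)) := by
    rw [huI]
    rw [Finset.prod_pow_eq_pow_sum]
    congr 1
    rw [compl_image_rev I, Finset.sum_image (fun x _ y _ h => Fin.rev_injective h),
      ← Finset.sum_coe_sort Iᶜ (fun x => ((Fin.rev (x : Fin n) : Fin n) : ℕ))]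
    exact Equiv.sum_comp (Iᶜ.orderIsoOfFin (card_compl_eq I hI)).toEquiv
      (fun y : ↥Iᶜ => ((Fin.rev (y : Fin n) : Fin n) : ℕ))
  have hprodJ : (∏ b, uJ b) = (-1 : R) ^ (∑ y ∈ (J.image Fin.rev)ᶜ, (y : ℕ)) := by
    rw [huJ]
    rw [Finset.prod_pow_eq_pow_sum]
    congr 1
    rw [compl_image_rev J, Finset.sum_image (fun x _ y _ h => Fin.rev_injective h),
      ← Finset.sum_coe_sort Jᶜ (fun x => ((Fin.rev (x : Fin n) : Fin n) : ℕ))]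
    exact Equiv.sum_comp (Jᶜ.orderIsoOfFin (card_compl_eq J hJ)).toEquiv
      (fun y : ↥Jᶜ => ((Fin.rev (y : Fin n) : Fin n) : ℕ))
  rw [hprodI, hprodJ]
  -- the sign identity
  have hsign : ε = (-1 : R) ^ (∑ x ∈ I, (x : ℕ) + ∑ x ∈ J, (x : ℕ)) := by
    rw [hεdef, hτdef, heI, heJ, sign_split_mul hkn I J hI hJ]
    push_cast
    ring
  have hparpow : ∀ a b : ℕ, a % 2 = b % 2 → (-1 : R) ^ a = (-1 : R) ^ b := by
    intro a b hab
    rcases Nat.even_or_odd a with h | h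
    · have ha := Nat.even_iff.mp h
      rw [h.neg_one_pow, (Nat.even_iff.mpr (by omega : b % 2 = 0)).neg_one_pow]
    · have ha := Nat.odd_iff.mp h
      rw [h.neg_one_pow, (Nat.odd_iff.mpr (by omega : b % 2 = 1)).neg_one_pow]
  have hparI := sum_compl_image_rev I
  have hparJ := sum_compl_image_rev J
  rw [hI] at hparI
  rw [hJ] at hparJ
  have hfin : ε = (-1 : R) ^ (∑ y ∈ (I.image Fin.rev)ᶜ, (y : ℕ))
      * (-1 : R) ^ (∑ y ∈ (J.image Fin.rev)ᶜ, (y : ℕ)) := by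
    rw [hsign, ← pow_add]
    exact hparpow _ _ (by omega)
  rw [hfin]
  ring
end
end

section
/- Let d ≥ 2 and let A be a d×(d+1) matrix over a commutative ring, with columns indexed 1,…,d+1. For 1 ≤ j ≤ d+1, let A⟨ĵ⟩ denote the d×d matrix obtained from A by deleting column j, and for 1 ≤ j < k ≤ d+1, let B⟨ĵ,k̂⟩ denote the (d−1)×(d−1) matrix obtained from A by deleting row 1 and columns j and k. Then the following three-term Desnanot–Jacobi (Plücker) identity holds: det A⟨1̂⟩ · det B⟨2̂, (d+1)^⟩ + det A⟨(d+1)^⟩ · det B⟨1̂, 2̂⟩ = det A⟨2̂⟩ · det B⟨1̂, (d+1)^⟩. -/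
/-!
The signed maximal minors `v j = (-1)^j det A⟨ĵ⟩` form a vector in the kernel of `A`: the `i`-th
entry of `A v` is the Laplace expansion of the square matrix obtained by repeating row `i` on top
of `A`. Now take any square matrix `M` whose rows are rows of `A` and whose columns are columns of
`A`, and replace one column of `M` by column `j` of `A`. Since the determinant is linear in that
column, the `v`-weighted sum of these determinants is the determinant with that column replaced by
(part of) `A v = 0`. For the rows `2, …, d` and the columns `1, 3, …, d` of `A`, replacing column `1`,
every `j` other than `1`, `2`, `d + 1` duplicates a column, and the three remaining terms are the
identity.
-/

namespace Matrix

theorem updateCol_submatrix_eq_submatrix_update {α m n ι κ : Type*} [DecidableEq κ]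
    (A : Matrix m n α) (f : ι → m) (σ : κ → n) (k : κ) (j : n) :
    (A.submatrix f σ).updateCol k (fun r => A (f r) j) = A.submatrix f (Function.update σ k j) := by
  ext r c
  by_cases hc : c = k
  · subst hc; simp
  · simp [hc]

variable {R : Type*} [CommRing R]

def signedMaxMinors {n : ℕ} (A : Matrix (Fin n) (Fin (n + 1)) R) : Fin (n + 1) → R :=
  fun j => (-1) ^ (j : ℕ) * (A.submatrix id j.succAbove).det

theorem mulVec_signedMaxMinors {n : ℕ} (A : Matrix (Fin n) (Fin (n + 1)) R) :
    A *ᵥ signedMaxMinors A = 0 := by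
  ext i
  let M : Matrix (Fin (n + 1)) (Fin (n + 1)) R := of (Fin.cons (A i) A)
  have hM : M.det = 0 := det_zero_of_row_eq (Fin.succ_ne_zero i).symm rfl
  rw [det_succ_row_zero] at hM
  rw [Pi.zero_apply, ← hM, mulVec, dotProduct]
  refine Finset.sum_congr rfl fun j _ => ?_
  change A i j * ((-1) ^ (j : ℕ) * (A.submatrix id j.succAbove).det)
    = (-1) ^ (j : ℕ) * A i j * (A.submatrix id j.succAbove).det
  ring

theorem det_submatrix_update_apply_eq_zero {m n ι : Type*} [Fintype ι] [DecidableEq ι]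
    (A : Matrix m n R) (f : ι → m) (σ : ι → n) {k l : ι} (hkl : k ≠ l) :
    (A.submatrix f (Function.update σ k (σ l))).det = 0 :=
  det_zero_of_column_eq hkl fun r => by simp [Function.update_of_ne hkl.symm]

theorem sum_signedMaxMinors_mul_det_submatrix_update {n : ℕ} {ι : Type*} [Fintype ι]
    [DecidableEq ι] (A : Matrix (Fin n) (Fin (n + 1)) R) (f : ι → Fin n)
    (σ : ι → Fin (n + 1)) (k : ι) :
    ∑ j, signedMaxMinors A j * (A.submatrix f (Function.update σ k j)).det = 0 := by
  set v := signedMaxMinors A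
  have hcol : (fun r => (A *ᵥ v) (f r)) = ∑ j, v j • fun r => A (f r) j := by
    ext r; simp [mulVec, dotProduct, mul_comm]
  calc ∑ j, v j * (A.submatrix f (Function.update σ k j)).det
      = ∑ j, v j * (A.submatrix f σ).cramer (fun r => A (f r) j) k := by
        simp only [cramer_apply, updateCol_submatrix_eq_submatrix_update]
    _ = (A.submatrix f σ).cramer (fun r => (A *ᵥ v) (f r)) k := by
        simp [hcol, map_sum, Finset.sum_apply]
    _ = 0 := by rw [mulVec_signedMaxMinors]; exact congrFun (map_zero _) k

end Matrix

open Matrix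

/-- The three-term Desnanot–Jacobi (Plücker) identity for a `d×(d+1)` matrix `A` (`d = m+2 ≥ 2`):
`det A⟨1̂⟩·det B⟨2̂,(d+1)^⟩ + det A⟨(d+1)^⟩·det B⟨1̂,2̂⟩ = det A⟨2̂⟩·det B⟨1̂,(d+1)^⟩`,
where `A⟨ĵ⟩` deletes column `j` and `B⟨ĵ,k̂⟩` deletes row `1` and columns `j` and `k`. -/
theorem desnanot_jacobi_rectangular {m : ℕ} {R : Type*} [CommRing R]
    (A : Matrix (Fin (m + 2)) (Fin (m + 3)) R) :
    (A.submatrix id Fin.succ).det *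
        (A.submatrix Fin.succ
          (fun c : Fin (m + 1) =>
            Fin.cases (0 : Fin (m + 3)) (fun i : Fin m => i.succ.succ.castSucc) c)).det
      + (A.submatrix id Fin.castSucc).det *
        (A.submatrix Fin.succ (fun c : Fin (m + 1) => c.succ.succ)).det
      = (A.submatrix id (Fin.succAbove 1)).det *
        (A.submatrix Fin.succ (fun c : Fin (m + 1) => c.succ.castSucc)).det := by
  set σ : Fin (m + 1) → Fin (m + 3) :=
    fun c => Fin.cases (0 : Fin (m + 3)) (fun i : Fin m => i.succ.succ.castSucc) c
  have hzero : Function.update σ 0 0 = σ := Function.update_eq_self 0 σ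
  have hone : Function.update σ 0 1 = fun c => c.succ.castSucc := by
    ext c
    cases c using Fin.cases <;> simp [σ]
  have hmid (i : Fin m) :
      (A.submatrix Fin.succ (Function.update σ 0 i.castSucc.succ.succ)).det = 0 :=
    det_submatrix_update_apply_eq_zero A Fin.succ σ (l := i.succ) (Fin.succ_ne_zero i).symm
  have hlast : (A.submatrix Fin.succ (Function.update σ 0 (Fin.last (m + 2)))).det
      = (-1) ^ m * (A.submatrix Fin.succ (fun c : Fin (m + 1) => c.succ.succ)).det := by
    have hrot : Function.update σ 0 (Fin.last (m + 2))
        = (fun c : Fin (m + 1) => c.succ.succ) ∘ (finRotate (m + 1)).symm := by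
      ext c
      cases c using Fin.cases <;> simp [σ, Fin.coe_sub_one]
    rw [hrot]
    change ((A.submatrix Fin.succ fun c => c.succ.succ).submatrix id (finRotate (m + 1)).symm).det
      = _
    rw [det_permute', Equiv.Perm.sign_symm, sign_finRotate]
    simp
  have key := sum_signedMaxMinors_mul_det_submatrix_update A Fin.succ σ 0
  rw [Fin.sum_univ_succ, Fin.sum_univ_succ, Fin.sum_univ_castSucc] at key
  simp only [Fin.succ_zero_eq_one, hzero, hone, hmid, Fin.succ_last, hlast,
    signedMaxMinors, Fin.succAbove_zero, Fin.succAbove_last, mul_zero, Finset.sum_const_zero,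
    zero_add, Fin.val_zero, Fin.val_one, Fin.val_last, pow_zero, pow_one,
    Nat.succ_eq_add_one] at key
  have hsign : ((-1 : R) ^ m) * (-1) ^ m = 1 := by rw [← mul_pow]; simp
  linear_combination key - (A.submatrix id Fin.castSucc).det *
    (A.submatrix Fin.succ (fun c : Fin (m + 1) => c.succ.succ)).det * hsign
end

section
/- Let n ≥ 2 and let M be an n×n matrix over a commutative ring. Fix row indices i₁ < i₂ and column indices j₁ < j₂ in {1,…,n}. Denote by M_{î}^{ĵ} the matrix obtained from M by deleting row i and column j, and by M_{î₁î₂}^{ĵ₁ĵ₂} the matrix obtained by deleting rows i₁, i₂ and columns j₁, j₂. Then the Desnanot–Jacobi identity holds: det M · det M_{î₁î₂}^{ĵ₁ĵ₂} = det M_{î₁}^{ĵ₁} · det M_{î₂}^{ĵ₂} − det M_{î₁}^{ĵ₂} · det M_{î₂}^{ĵ₁}. -/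
/-!
Let `B` be the identity matrix with rows `i₁, i₂` replaced by the rows `j₁, j₂` of `adj M`.
Since `adj M * M = det M • 1`, the product `B * M` is `M` with rows `i₁, i₂` replaced by
`det M • e_{j₁}, det M • e_{j₂}`. Taking determinants, `det M` times the `2 × 2` minor of `adj M`
equals `(det M)²` times a signed complementary minor of `M`. Cancelling one factor `det M` is
legitimate for the generic matrix over `ℤ[x_{ij}]`, and the resulting identity specializes to
every matrix. Expanding the entries of `adj M` as signed `(n - 1)`-minors gives the theorem.
-/

open Matrix

namespace Matrix

theorem submatrix_updateRow_single {l m o p α : Type*} [DecidableEq l] [DecidableEq m]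
    [DecidableEq o] [DecidableEq p] [Zero α] (A : Matrix m p α) {f : l → m} {g : o → p}
    (hf : Function.Injective f) (hg : Function.Injective g) (i : l) (j : o) (c : α) :
    (A.updateRow (f i) (Pi.single (g j) c)).submatrix f g =
      (A.submatrix f g).updateRow i (Pi.single j c) := by
  ext r s
  simp [updateRow_apply, Pi.single_apply, hf.eq_iff, hg.eq_iff]

variable {n R : Type*} [Fintype n] [DecidableEq n] [CommRing R]

theorem det_one_updateRow (i : n) (v : n → R) :
    det ((1 : Matrix n n R).updateRow i v) = v i := by
  have hv : v = ∑ k, v k • (1 : Matrix n n R) k := by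
    ext j
    simp [one_apply]
  conv_lhs => rw [hv, det_updateRow_sum, det_one, smul_eq_mul, mul_one]

theorem det_updateRow_updateRow_swap (A : Matrix n n R) {i j : n} (hij : i ≠ j) (x y : n → R) :
    det ((A.updateRow i x).updateRow j y) = -det ((A.updateRow i y).updateRow j x) := by
  have h_perm : (A.updateRow i y).updateRow j x =
      ((A.updateRow i x).updateRow j y).submatrix (Equiv.swap i j) id := by
    ext r c
    rcases eq_or_ne r i with rfl | hri
    · simp [updateRow_apply, hij]
    rcases eq_or_ne r j with rfl | hrj
    · simp [updateRow_apply, hij]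
    · simp [updateRow_apply, hri, hrj, Equiv.swap_apply_of_ne_of_ne]
  rw [h_perm, det_permute, Equiv.Perm.sign_swap hij]
  simp

theorem det_one_updateRow_updateRow {i j : n} (hij : i ≠ j) (v w : n → R) :
    det (((1 : Matrix n n R).updateRow i v).updateRow j w) = v i * w j - v j * w i := by
  have h_one (k : n) : (1 : Matrix n n R) k = Pi.single k 1 := by
    ext l
    simp [one_apply, Pi.single_apply, eq_comm]
  have h_single (k : n) : det (((1 : Matrix n n R).updateRow i v).updateRow j (Pi.single k 1)) =
      if k = j then v i else if k = i then -v j else 0 := by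
    split_ifs with hkj hki
    · rw [hkj, ← h_one, ← updateRow_ne (M := (1 : Matrix n n R)) (b := v) hij.symm,
        updateRow_eq_self, det_one_updateRow]
    · rw [hki, det_updateRow_updateRow_swap _ hij, ← h_one, updateRow_eq_self, det_one_updateRow]
    · refine det_zero_of_row_eq hkj ?_
      simp [updateRow_ne hki, updateRow_ne hkj, h_one]
  rw [det_eq_sum_mul_adjugate_row _ j]
  simp only [adjugate_apply, updateRow_idem, updateRow_self, h_single]
  rw [Fintype.sum_eq_add j i hij.symm fun k hk => by simp [hk.1, hk.2]]
  rw [if_pos rfl, if_neg hij, if_pos rfl]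
  ring

theorem det_updateRow_single_updateRow_single (A : Matrix n n R) {i₁ i₂ : n} (hi : i₁ ≠ i₂)
    (j₁ j₂ : n) (c₁ c₂ : R) :
    det ((A.updateRow i₁ (Pi.single j₁ c₁)).updateRow i₂ (Pi.single j₂ c₂)) =
      c₁ * c₂ * det ((A.updateRow i₁ (Pi.single j₁ 1)).updateRow i₂ (Pi.single j₂ 1)) := by
  have h_smul (j : n) (c : R) : Pi.single j c = c • Pi.single j 1 := by
    rw [← Pi.single_smul', smul_eq_mul, mul_one]
  rw [h_smul j₁, h_smul j₂, det_updateRow_smul, updateRow_comm _ hi, det_updateRow_smul,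
    updateRow_comm _ hi.symm, mul_left_comm, mul_assoc]

theorem det_mul_adjugate_mul_sub_mul (M : Matrix n n R) {i₁ i₂ : n} (hi : i₁ ≠ i₂) (j₁ j₂ : n) :
    det M * (adjugate M j₁ i₁ * adjugate M j₂ i₂ - adjugate M j₁ i₂ * adjugate M j₂ i₁) =
      det M * (det M * det ((M.updateRow i₁ (Pi.single j₁ 1)).updateRow i₂ (Pi.single j₂ 1))) := by
  set B := ((1 : Matrix n n R).updateRow i₁ (adjugate M j₁)).updateRow i₂ (adjugate M j₂)
  have h_row (j : n) : adjugate M j ᵥ* M = Pi.single j (det M) := by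
    ext k
    simp [← mul_apply_eq_vecMul, adjugate_mul, one_apply, Pi.single_apply, eq_comm]
  have hBM : B * M =
      (M.updateRow i₁ (Pi.single j₁ (det M))).updateRow i₂ (Pi.single j₂ (det M)) := by
    simp only [B, updateRow_mul, Matrix.one_mul, h_row]
  calc det M * (adjugate M j₁ i₁ * adjugate M j₂ i₂ - adjugate M j₁ i₂ * adjugate M j₂ i₁)
      = det (B * M) := by rw [det_mul, det_one_updateRow_updateRow hi, mul_comm]
    _ = _ := by rw [hBM, det_updateRow_single_updateRow_single _ hi, mul_assoc]

theorem adjugate_mul_sub_mul (M : Matrix n n R) {i₁ i₂ : n} (hi : i₁ ≠ i₂) (j₁ j₂ : n) :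
    adjugate M j₁ i₁ * adjugate M j₂ i₂ - adjugate M j₁ i₂ * adjugate M j₂ i₁ =
      det M * det ((M.updateRow i₁ (Pi.single j₁ 1)).updateRow i₂ (Pi.single j₂ 1)) := by
  obtain ⟨f, rfl⟩ : ∃ f : MvPolynomial (n × n) ℤ →ₐ[ℤ] R,
      f.mapMatrix (mvPolynomialX n n ℤ) = M :=
    ⟨_, mvPolynomialX_mapMatrix_aeval ℤ M⟩
  have h := congrArg f <| mul_left_cancel₀ (det_mvPolynomialX_ne_zero n ℤ)
    (det_mul_adjugate_mul_sub_mul (mvPolynomialX n n ℤ) hi j₁ j₂)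
  have h_single (j : n) : ⇑f ∘ Pi.single j 1 = Pi.single j 1 := by
    ext k
    simp [Pi.single_apply, apply_ite f]
  rw [← AlgHom.map_adjugate]
  simpa only [map_sub, map_mul, AlgHom.map_det, AlgHom.mapMatrix_apply, map_apply, map_updateRow,
    h_single] using h

theorem det_updateRow_single_succAbove {m : ℕ} (A : Matrix (Fin (m + 2)) (Fin (m + 2)) R)
    (i₂ j₂ : Fin (m + 2)) (i j : Fin (m + 1)) :
    det ((A.updateRow (i₂.succAbove i) (Pi.single (j₂.succAbove j) 1)).updateRow i₂
        (Pi.single j₂ 1)) =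
      (-1) ^ (i₂ + j₂ + (i + j) : ℕ) *
        det (A.submatrix (i₂.succAbove ∘ i.succAbove) (j₂.succAbove ∘ j.succAbove)) := by
  rw [← adjugate_apply, adjugate_fin_succ_eq_det_submatrix,
    submatrix_updateRow_single _ i₂.succAbove_right_injective j₂.succAbove_right_injective,
    ← adjugate_apply, adjugate_fin_succ_eq_det_submatrix, submatrix_submatrix, pow_add]
  ring

end Matrix

/-- The Desnanot–Jacobi identity for an `n×n` matrix (`n = m+2 ≥ 2`): with rows `i₁ < i₂` and
columns `j₁ < j₂` deleted as indicated,
`det M · det M_{î₁î₂}^{ĵ₁ĵ₂} = det M_{î₁}^{ĵ₁}·det M_{î₂}^{ĵ₂} − det M_{î₁}^{ĵ₂}·det M_{î₂}^{ĵ₁}`. -/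
theorem desnanot_jacobi {m : ℕ} {R : Type*} [CommRing R]
    (M : Matrix (Fin (m + 2)) (Fin (m + 2)) R)
    (i₁ i₂ j₁ j₂ : Fin (m + 2))
    (hi : (i₁ : ℕ) < (i₂ : ℕ)) (hj : (j₁ : ℕ) < (j₂ : ℕ)) :
    M.det *
      (M.submatrix
        (i₂.succAbove ∘ (⟨(i₁ : ℕ), by have := i₂.isLt; omega⟩ : Fin (m + 1)).succAbove)
        (j₂.succAbove ∘ (⟨(j₁ : ℕ), by have := j₂.isLt; omega⟩ : Fin (m + 1)).succAbove)).det
      = (M.submatrix i₁.succAbove j₁.succAbove).det *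
          (M.submatrix i₂.succAbove j₂.succAbove).det
        - (M.submatrix i₁.succAbove j₂.succAbove).det *
          (M.submatrix i₂.succAbove j₁.succAbove).det := by
  have hi₁ : i₂.succAbove ⟨i₁, by omega⟩ = i₁ := Fin.succAbove_of_castSucc_lt _ _ hi
  have hj₁ : j₂.succAbove ⟨j₁, by omega⟩ = j₁ := Fin.succAbove_of_castSucc_lt _ _ hj
  have h_minor := M.det_updateRow_single_succAbove i₂ j₂ ⟨i₁, by omega⟩ ⟨j₁, by omega⟩
  rw [hi₁, hj₁] at h_minor
  have h_jacobi := M.adjugate_mul_sub_mul (Fin.ne_of_lt hi) j₁ j₂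
  rw [h_minor] at h_jacobi
  simp only [adjugate_fin_succ_eq_det_submatrix] at h_jacobi
  refine (isUnit_neg_one.pow (i₁ + j₁ + i₂ + j₂ : ℕ)).mul_left_cancel ?_
  linear_combination -h_jacobi
end
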